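/- arXiv:2204.04882 — 6 statements merged into one kernel-verified Lean document; each statement's English description precedes it below -/
import Mathlib

section
/- Let S ⊆ ℕ^d be a good semigroup and E ⊆ S a good ideal. If α ∈ S \ E and the set Δ^E_F(α) is nonempty for some F ⊊ {1,...,d}, then the set Δ̃^E_{F̂}(α) is empty, where F̂ denotes the complement of F. -/
open Finset Set

abbrev Vec (d : ℕ) := Fin d → ℕ

/-- Axioms (G1), (G2), (G3) of a good semigroup/ideal. -/
def goodAxioms {d : ℕ} (E : Set (Vec d)) : Prop :=
  (∀ a ∈ E, ∀ b ∈ E, a ⊓ b ∈ E) ∧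
  (∀ a ∈ E, ∀ b ∈ E, a ≠ b → ∀ i : Fin d, a i = b i →
    ∃ e ∈ E, a i < e i ∧ ∀ j : Fin d, j ≠ i →
      (min (a j) (b j) ≤ e j ∧ (a j ≠ b j → e j = min (a j) (b j)))) ∧
  (∃ c ∈ E, ∀ x : Vec d, c ≤ x → x ∈ E)

def IsGoodSemigroup {d : ℕ} (S : Set (Vec d)) : Prop :=
  0 ∈ S ∧ (∀ a ∈ S, ∀ b ∈ S, a + b ∈ S) ∧ goodAxioms S

def IsGoodIdeal {d : ℕ} (S E : Set (Vec d)) : Prop :=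
  E ⊆ S ∧ (∀ a ∈ E, ∀ s ∈ S, a + s ∈ E) ∧ goodAxioms E

/-- Δ^E_F(α). -/
def DeltaF {d : ℕ} (E : Set (Vec d)) (F : Finset (Fin d)) (α : Vec d) : Set (Vec d) :=
  {β ∈ E | (∀ i ∈ F, β i = α i) ∧ ∀ j, j ∉ F → α j < β j}

/-- Δ̃^E_F(α). -/
def DeltaTildeF {d : ℕ} (E : Set (Vec d)) (F : Finset (Fin d)) (α : Vec d) : Set (Vec d) :=
  {β ∈ E | (∀ i ∈ F, β i = α i) ∧ ∀ j, j ∉ F → α j ≤ β j} \ {α}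

/-- Δ^E(α) = ∪_k Δ^E_k(α). -/
def DeltaSet {d : ℕ} (E : Set (Vec d)) (α : Vec d) : Set (Vec d) :=
  {β ∈ E | ∃ k : Fin d, β k = α k ∧ ∀ j, j ≠ k → α j < β j}

/-- α ≪ β : domination. -/
def llt {d : ℕ} (α β : Vec d) : Prop := ∀ i, α i < β i

/-- α is a complete infimum of elements of B (Δ's taken in S). -/
def IsCompleteInfIn {d : ℕ} (S B : Set (Vec d)) (α : Vec d) : Prop :=
  ∃ (r : ℕ) (β : Fin r → Vec d) (F : Fin r → Finset (Fin d)),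
    2 ≤ r ∧ r ≤ d ∧
    (∀ j, β j ∈ B ∧ (F j).Nonempty ∧ F j ≠ Finset.univ ∧ β j ∈ DeltaF S (F j) α) ∧
    (∀ j k, j ≠ k → α = β j ⊓ β k) ∧
    Finset.univ.inf F = ∅

/-- Maximal elements of A with respect to ≪. -/
def maxLL {d : ℕ} (A : Set (Vec d)) : Set (Vec d) := {α ∈ A | ∀ β ∈ A, ¬ llt α β}

/-- One step D of the canonical partition, after removing R. -/
def Dstep {d : ℕ} (S E : Set (Vec d)) (R : Set (Vec d)) : Set (Vec d) :=
  maxLL ((S \ E) \ R) \ {α | IsCompleteInfIn S (maxLL ((S \ E) \ R)) α}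

def removedUpTo {d : ℕ} (S E : Set (Vec d)) : ℕ → Set (Vec d)
  | 0 => ∅
  | n + 1 => removedUpTo S E n ∪ Dstep S E (removedUpTo S E n)

/-- D^(n) in the canonical partition (n ≥ 1). -/
def Dlevel {d : ℕ} (S E : Set (Vec d)) (n : ℕ) : Set (Vec d) :=
  Dstep S E (removedUpTo S E (n - 1))

/-- The partition of S \ E terminates after N steps. -/
def LevelsTo {d : ℕ} (S E : Set (Vec d)) (N : ℕ) : Prop :=
  (S \ E) = ⋃ i ∈ Finset.Icc 1 N, Dlevel S E i

/-- The i-th level A_i = D^(N+1-i). -/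
def Level {d : ℕ} (S E : Set (Vec d)) (N i : ℕ) : Set (Vec d) :=
  Dlevel S E (N + 1 - i)

/-- α, β consecutive in A. -/
def ConsecutiveIn {d : ℕ} (A : Set (Vec d)) (α β : Vec d) : Prop :=
  ∀ δ ∈ A, α ≤ δ → δ ≤ β → δ = α ∨ δ = β

def coeZ {d : ℕ} (x : Vec d) : Fin d → ℤ := fun i => (x i : ℤ)

/-- Δ^S_F(β) for β ∈ ℤ^d. -/
def DeltaFZ {d : ℕ} (S : Set (Vec d)) (F : Finset (Fin d)) (β : Fin d → ℤ) : Set (Vec d) :=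
  {θ ∈ S | (∀ i ∈ F, (θ i : ℤ) = β i) ∧ ∀ j, j ∉ F → β j < (θ j : ℤ)}

/-- Δ^S_k(β) for β ∈ ℤ^d. -/
def DeltaZk {d : ℕ} (S : Set (Vec d)) (k : Fin d) (β : Fin d → ℤ) : Set (Vec d) :=
  {θ ∈ S | (θ k : ℤ) = β k ∧ ∀ j, j ≠ k → β j < (θ j : ℤ)}

/-- Δ^S(β) for β ∈ ℤ^d. -/
def DeltaZ {d : ℕ} (S : Set (Vec d)) (β : Fin d → ℤ) : Set (Vec d) :=
  {θ ∈ S | ∃ k : Fin d, (θ k : ℤ) = β k ∧ ∀ j, j ≠ k → β j < (θ j : ℤ)}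

/-- α ∈ ℤ^d belongs to T ⊆ ℕ^d. -/
def memZ {d : ℕ} (T : Set (Vec d)) (α : Fin d → ℤ) : Prop := ∃ a ∈ T, coeZ a = α

/-- c is the conductor of E. -/
def IsConductor {d : ℕ} (E : Set (Vec d)) (c : Vec d) : Prop :=
  (∀ x, c ≤ x → x ∈ E) ∧ ∀ c', (∀ x, c' ≤ x → x ∈ E) → c ≤ c'

/-- A = S \ E is a symmetric complement (with γ = γ_E). -/
def SymComplement {d : ℕ} (S E : Set (Vec d)) (γ : Fin d → ℤ) (N : ℕ) : Prop :=
  Level S E N 1 = {0} ∧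
  (∀ α : Fin d → ℤ, memZ E α ↔ DeltaZ S (γ - α) = ∅) ∧
  (∀ α : Fin d → ℤ, memZ (S \ E) α ↔
    ((DeltaZ S (γ - α)).Nonempty ∧ DeltaZ S (γ - α) ⊆ S \ E))

/-- A = S \ E is well-behaved. -/
def WellBehaved {d : ℕ} (S E : Set (Vec d)) : Prop :=
  ∀ α ∈ S,
    (∃ (r : ℕ) (β : Fin r → Vec d) (G : Fin r → Finset (Fin d)),
      2 ≤ r ∧
      (∀ j, (G j).Nonempty ∧ G j ≠ Finset.univ ∧ β j ∈ DeltaTildeF S (G j) α ∧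
        DeltaTildeF S (G j) α ⊆ S \ E) ∧
      (∀ j k, j ≠ k → α = β j ⊓ β k) ∧
      Finset.univ.inf G = ∅) → α ∈ E

open scoped Classical in
/-- The level function λ of the complement of a good ideal. -/
noncomputable def levelFun {d : ℕ} (S E : Set (Vec d)) (N : ℕ) (α : Vec d) : ℕ :=
  if α ∈ S \ E then sInf {i | α ∈ Level S E N i}
  else 1 + sSup {i | ∃ θ ∈ Level S E N i, θ < α}

def proj1 {d₁ d₂ : ℕ} (x : Fin (d₁ + d₂) → ℕ) : Vec d₁ := fun i => x (Fin.castAdd d₂ i)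
def proj2 {d₁ d₂ : ℕ} (x : Fin (d₁ + d₂) → ℕ) : Vec d₂ := fun i => x (Fin.natAdd d₁ i)

/-- The product S₁ × S₂ inside ℕ^{d₁+d₂}. -/
def prodSet {d₁ d₂ : ℕ} (S₁ : Set (Vec d₁)) (S₂ : Set (Vec d₂)) :
    Set (Fin (d₁ + d₂) → ℕ) :=
  {x | proj1 x ∈ S₁ ∧ proj2 x ∈ S₂}

def IsNumericalSemigroup (T : Set ℕ) : Prop :=
  0 ∈ T ∧ (∀ a ∈ T, ∀ b ∈ T, a + b ∈ T) ∧ ∃ c, ∀ x, c ≤ x → x ∈ T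

/-- The Apéry set of a numerical semigroup T with respect to w. -/
def AperyN (T : Set ℕ) (w : ℕ) : Set ℕ := {t ∈ T | ¬ ∃ s ∈ T, t = w + s}


theorem inf_eq_of_mem_DeltaF_of_mem_DeltaTildeF_compl {d : ℕ} {E E' : Set (Vec d)}
    {F : Finset (Fin d)} {α β δ : Vec d} (hβ : β ∈ DeltaF E F α)
    (hδ : δ ∈ DeltaTildeF E' Fᶜ α) : β ⊓ δ = α := by
  obtain ⟨-, hβF, hβFc⟩ := hβ
  obtain ⟨⟨-, hδFc, hδF⟩, -⟩ := hδ
  funext i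
  by_cases hi : i ∈ F
  · rw [Pi.inf_apply, hβF i hi, min_eq_left (hδF i (Finset.notMem_compl.2 hi))]
  · rw [Pi.inf_apply, hδFc i (Finset.mem_compl.2 hi), min_eq_right (hβFc i hi).le]

theorem stmt1_general {d : ℕ} (S E : Set (Vec d))
    (hE : IsGoodIdeal S E) (α : Vec d) (hα : α ∈ S \ E)
    (F : Finset (Fin d))
    (hne : (DeltaF E F α).Nonempty) :
    DeltaTildeF E Fᶜ α = ∅ := by
  obtain ⟨β, hβ⟩ := hne
  refine Set.eq_empty_of_forall_notMem fun δ hδ => hα.2 ?_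
  rw [← inf_eq_of_mem_DeltaF_of_mem_DeltaTildeF_compl hβ hδ]
  exact hE.2.2.1 β hβ.1 δ hδ.1.1

theorem stmt1 {d : ℕ} (S E : Set (Vec d)) (hS : IsGoodSemigroup S)
    (hE : IsGoodIdeal S E) (α : Vec d) (hα : α ∈ S \ E)
    (F : Finset (Fin d)) (hF : F ≠ Finset.univ)
    (hne : (DeltaF E F α).Nonempty) :
    DeltaTildeF E Fᶜ α = ∅ :=
  stmt1_general S E hE α hα F hne
end

section
/- Let S ⊆ ℕ^d be a good semigroup and E ⊆ S a good ideal. Let α ∈ E, β ∈ Δ^E_F(α), and θ ∈ Δ^E_G(α). If F ∪ G ⊊ {1,...,d} then β ∧ θ ∈ Δ^E_{F∪G}(α), while if F ∪ G = {1,...,d} then β ∧ θ = α. -/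
open Finset Set

section DeltaF

variable {d : ℕ} {E : Set (Vec d)} {F G : Finset (Fin d)} {α β θ : Vec d}

theorem le_of_mem_DeltaF (hβ : β ∈ DeltaF E F α) : α ≤ β := fun i =>
  if hi : i ∈ F then (hβ.2.1 i hi).ge else (hβ.2.2 i hi).le

theorem eq_of_mem_DeltaF_univ (hβ : β ∈ DeltaF E Finset.univ α) : β = α :=
  funext fun i => hβ.2.1 i (Finset.mem_univ i)

theorem inf_mem_DeltaF_union (hE : ∀ a ∈ E, ∀ b ∈ E, a ⊓ b ∈ E)
    (hβ : β ∈ DeltaF E F α) (hθ : θ ∈ DeltaF E G α) :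
    β ⊓ θ ∈ DeltaF E (F ∪ G) α := by
  refine ⟨hE β hβ.1 θ hθ.1, fun i hi => ?_, fun j hj => ?_⟩
  · have hα_le : α ≤ β ⊓ θ := le_inf (le_of_mem_DeltaF hβ) (le_of_mem_DeltaF hθ)
    refine le_antisymm ?_ (hα_le i)
    rcases Finset.mem_union.mp hi with hF | hG
    · exact (min_le_left _ _).trans (hβ.2.1 i hF).le
    · exact (min_le_right _ _).trans (hθ.2.1 i hG).le
  · rw [Finset.mem_union, not_or] at hj
    exact lt_min (hβ.2.2 j hj.1) (hθ.2.2 j hj.2)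

end DeltaF

theorem stmt2_general {d : ℕ} (S E : Set (Vec d))
    (hE : IsGoodIdeal S E) (α : Vec d)
    (F G : Finset (Fin d)) (β θ : Vec d)
    (hβ : β ∈ DeltaF E F α) (hθ : θ ∈ DeltaF E G α) :
    (F ∪ G ≠ Finset.univ → β ⊓ θ ∈ DeltaF E (F ∪ G) α) ∧
    (F ∪ G = Finset.univ → β ⊓ θ = α) := by
  have hinf := inf_mem_DeltaF_union hE.2.2.1 hβ hθ
  exact ⟨fun _ => hinf, fun huniv => eq_of_mem_DeltaF_univ (huniv ▸ hinf)⟩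

theorem stmt2 {d : ℕ} (S E : Set (Vec d)) (hS : IsGoodSemigroup S)
    (hE : IsGoodIdeal S E) (α : Vec d) (hα : α ∈ E)
    (F G : Finset (Fin d)) (β θ : Vec d)
    (hβ : β ∈ DeltaF E F α) (hθ : θ ∈ DeltaF E G α) :
    (F ∪ G ≠ Finset.univ → β ⊓ θ ∈ DeltaF E (F ∪ G) α) ∧
    (F ∪ G = Finset.univ → β ⊓ θ = α) :=
  stmt2_general S E hE α F G β θ hβ hθ
end

section
/- Let S ⊆ ℕ^d be a good semigroup and A = A_1 ∪ ... ∪ A_N the partition in levels of the complement of a good ideal E ⊆ S. Let α ∈ ℕ^d and suppose Δ^S(α) is nonempty and contained in A. Then all the minimal elements of Δ^S(α) lie in the same level A_i. -/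
open Finset Set

/-! Key lemma: suppose `β` is protected along `k` (every `x ∈ S` with `β ≤ x` and `x k = β k` lies in
`S \ E`) and some `θ` still present at stage `m` satisfies `β ≤ θ`, `β k < θ k`. Then `β` is not
removed at stage `m`. Otherwise `θ` must share a coordinate with `β`, and for each such coordinate
`i` axiom (G2) gives a least `w i ∈ S` above `β` and strictly above it at `i`. By induction on the
stage the `w i` are still present, hence maximal, and `θ` together with the `w i` exhibits `β` as a
complete infimum.

A minimal element `β` of `Δ^S(α)` is protected along its own coordinate, and lies below every
element of `S` dominating `α`. If another element of `Δ^S(α)` survived the stage removing `β`, it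
would be dominated or part of a complete infimum at that stage, which yields such a `θ`. -/

section GoodSemigroup

variable {d : ℕ} {S : Set (Vec d)}

theorem exists_isLeast_of_inf_mem {ι : Type*} [SemilatticeInf ι] [WellFoundedLT ι] {T : Set ι}
    (hT : T.Nonempty) (hinf : ∀ a ∈ T, ∀ b ∈ T, a ⊓ b ∈ T) : ∃ w, IsLeast T w := by
  obtain ⟨w, hw, hmin⟩ := wellFounded_lt.has_min T hT
  refine ⟨w, hw, fun x hx => ?_⟩
  have : w ⊓ x = w := inf_le_left.eq_of_not_lt (hmin _ (hinf w hw x hx))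
  exact this ▸ inf_le_right

def strictAboveAt (S : Set (Vec d)) (β : Vec d) (i : Fin d) : Set (Vec d) :=
  {x ∈ S | β ≤ x ∧ β i < x i}

theorem goodAxioms.exists_mem_strictAboveAt (hG : goodAxioms S) {a b : Vec d} (ha : a ∈ S)
    (hb : b ∈ S) (hab : a ≠ b) {i : Fin d} (hi : a i = b i) :
    ∃ e ∈ strictAboveAt S (a ⊓ b) i, ∀ l, a l ≠ b l → e l = (a ⊓ b) l := by
  obtain ⟨e, he, hei, hoff⟩ := hG.2.1 a ha b hb hab i hi
  have hmin_i : (a ⊓ b) i = a i := by simp [Pi.inf_apply, hi]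
  refine ⟨e, ⟨he, fun l => ?_, hmin_i ▸ hei⟩,
    fun l hl => (hoff l (by rintro rfl; exact hl hi)).2 hl⟩
  by_cases hli : l = i
  · subst hli; exact hmin_i ▸ hei.le
  · exact (hoff l hli).1

theorem isCompleteInfIn_of_finset {B : Set (Vec d)} {β : Vec d} (V : Finset (Vec d))
    (hcard : 2 ≤ V.card) (hcard_le : V.card ≤ d)
    (hV : ∀ v ∈ V, v ∈ B ∧ v ∈ S ∧ β < v ∧ ∃ l, v l = β l)
    (hinf : ∀ v ∈ V, ∀ v' ∈ V, v ≠ v' → β = v ⊓ v')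
    (hcover : ∀ l, ∃ v ∈ V, β l < v l) : IsCompleteInfIn S B β := by
  set b : Fin V.card → Vec d := fun j => V.equivFin.symm j
  have hb : ∀ j, b j ∈ V := fun j => (V.equivFin.symm j).2
  refine ⟨V.card, b, fun j => univ.filter fun l => b j l = β l, hcard, hcard_le,
    fun j => ?_, fun j j' hjj' => hinf _ (hb j) _ (hb j') ?_, ?_⟩
  · obtain ⟨hB, hS, hlt, l, hl⟩ := hV _ (hb j)
    obtain ⟨l', hl'⟩ := (Pi.lt_def.1 hlt).2
    refine ⟨hB, ⟨l, by simpa using hl⟩, fun h => ?_, hS, fun l hl => by simpa using hl, ?_⟩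
    · exact hl'.ne' (by simpa using Finset.eq_univ_iff_forall.1 h l')
    · intro l hl
      exact (hlt.le l).lt_of_ne (by simpa [eq_comm] using hl)
  · exact fun h => hjj' (V.equivFin.symm.injective (Subtype.ext h))
  · refine Finset.eq_empty_of_forall_notMem fun l hl => ?_
    obtain ⟨v, hv, hlt⟩ := hcover l
    have := Finset.inf_le (f := fun j => univ.filter fun l => b j l = β l)
      (Finset.mem_univ (V.equivFin ⟨v, hv⟩)) hl
    simp [b] at this
    exact hlt.ne' this

section LeastAbove

variable {β θ : Vec d} {k : Fin d}

theorem exists_isLeast_strictAboveAt (hG : goodAxioms S) (hβ : β ∈ S) (hθ : θ ∈ S)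
    (hβθ : β ≤ θ) (hne : β ≠ θ) {i : Fin d} (hi : θ i = β i) :
    ∃ w, IsLeast (strictAboveAt S β i) w := by
  obtain ⟨e, he, -⟩ := hG.exists_mem_strictAboveAt hβ hθ hne hi.symm
  rw [inf_eq_left.2 hβθ] at he
  refine exists_isLeast_of_inf_mem ⟨e, he⟩ ?_
  rintro a ⟨ha, hβa, hai⟩ b ⟨hb, hβb, hbi⟩
  exact ⟨hG.1 a ha b hb, le_inf hβa hβb, lt_min hai hbi⟩

theorem isLeast_strictAboveAt_apply_eq (hG : goodAxioms S) {w : Vec d} (hβ : β ∈ S) (hθ : θ ∈ S)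
    (hβθ : β ≤ θ) {i : Fin d} (hi : θ i = β i)
    (hw : IsLeast (strictAboveAt S β i) w) {l : Fin d} (hl : θ l ≠ β l) : w l = β l := by
  obtain ⟨e, he, hoff⟩ :=
    hG.exists_mem_strictAboveAt hβ hθ (fun h => hl (h ▸ rfl)) hi.symm
  rw [inf_eq_left.2 hβθ] at he hoff
  exact le_antisymm ((hw.2 he l).trans (hoff l hl.symm).le) (hw.1.2.1 l)

theorem isLeast_strictAboveAt_inf_eq (hG : goodAxioms S) {w : Vec d} (hβ : β ∈ S) (hθ : θ ∈ S)
    (hβθ : β ≤ θ) {i : Fin d} (hi : θ i = β i) (hw : IsLeast (strictAboveAt S β i) w) :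
    w ⊓ θ = β := funext fun x => by
  by_cases hx : θ x = β x
  · simp [Pi.inf_apply, hx, hw.1.2.1 x]
  · simp [Pi.inf_apply, isLeast_strictAboveAt_apply_eq hG hβ hθ hβθ hi hw hx, hβθ x]

theorem isLeast_strictAboveAt_ne (hG : goodAxioms S) {w : Vec d} (hβ : β ∈ S) (hθ : θ ∈ S)
    (hβθ : β ≤ θ) (hk : β k < θ k) {i : Fin d} (hi : θ i = β i)
    (hw : IsLeast (strictAboveAt S β i) w) : w ≠ θ := fun h =>
  hk.ne' (h ▸ isLeast_strictAboveAt_apply_eq hG hβ hθ hβθ hi hw hk.ne')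

theorem inf_eq_of_isLeast_strictAboveAt (hG : goodAxioms S) {w w' : Vec d} (hβ : β ∈ S)
    (hθ : θ ∈ S) (hβθ : β ≤ θ) (hk : β k < θ k) {i l : Fin d} (hi : θ i = β i)
    (hl : θ l = β l) (hw : IsLeast (strictAboveAt S β i) w)
    (hw' : IsLeast (strictAboveAt S β l) w') (hwl : w l = β l) : w ⊓ w' = β := by
  have hinf := isLeast_strictAboveAt_inf_eq hG hβ hθ hβθ hi hw
  obtain ⟨e, he, heoff⟩ := hG.exists_mem_strictAboveAt hw.1.1 hθ
    (isLeast_strictAboveAt_ne hG hβ hθ hβθ hk hi hw) (hwl.trans hl.symm)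
  rw [hinf] at he heoff
  have hw'e : w' ≤ e := hw'.2 ⟨he.1, he.2.1, hwl ▸ he.2.2⟩
  refine funext fun x => le_antisymm ?_ (le_inf hw.1.2.1 hw'.1.2.1 x)
  by_cases hx : w x = β x
  · exact inf_le_left.trans hx.le
  · have hθx : θ x = β x :=
      by_contra fun h => hx (isLeast_strictAboveAt_apply_eq hG hβ hθ hβθ hi hw h)
    exact inf_le_right.trans ((hw'e x).trans (heoff x (hθx ▸ hx)).le)

theorem inf_eq_of_isLeast_strictAboveAt_of_ne (hG : goodAxioms S) {w w' : Vec d} (hβ : β ∈ S)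
    (hθ : θ ∈ S) (hβθ : β ≤ θ) (hk : β k < θ k) {i l : Fin d} (hi : θ i = β i)
    (hl : θ l = β l) (hw : IsLeast (strictAboveAt S β i) w)
    (hw' : IsLeast (strictAboveAt S β l) w') (hne : w ≠ w') : w ⊓ w' = β := by
  by_cases hwl : w l = β l
  · exact inf_eq_of_isLeast_strictAboveAt hG hβ hθ hβθ hk hi hl hw hw' hwl
  by_cases hw'i : w' i = β i
  · exact inf_comm w w' ▸ inf_eq_of_isLeast_strictAboveAt hG hβ hθ hβθ hk hl hi hw' hw hw'i
  -- Otherwise each of `w`, `w'` lies in the set the other one is least in.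
  refine absurd (le_antisymm (hw.2 ⟨hw'.1.1, hw'.1.2.1, ?_⟩) (hw'.2 ⟨hw.1.1, hw.1.2.1, ?_⟩)) hne
  exacts [(hw'.1.2.1 i).lt_of_ne' hw'i, (hw.1.2.1 l).lt_of_ne' hwl]

theorem isCompleteInfIn_of_isLeast_strictAboveAt (hG : goodAxioms S) {B : Set (Vec d)}
    {w : Fin d → Vec d} (hβ : β ∈ S) (hθ : θ ∈ S) (hβθ : β ≤ θ) (hk : β k < θ k)
    (hJ : ∃ i, θ i = β i) (hw : ∀ i, θ i = β i → IsLeast (strictAboveAt S β i) (w i))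
    (hθB : θ ∈ B) (hwB : ∀ i, θ i = β i → w i ∈ B) : IsCompleteInfIn S B β := by
  set J := univ.filter fun i => θ i = β i
  have hJmem : ∀ {i}, i ∈ J ↔ θ i = β i := by simp [J]
  have hθV : θ ∉ J.image w := by
    simp only [Finset.mem_image, not_exists, not_and]
    exact fun i hi => isLeast_strictAboveAt_ne hG hβ hθ hβθ hk (hJmem.1 hi) (hw i (hJmem.1 hi))
  refine isCompleteInfIn_of_finset (insert θ (J.image w)) ?_ ?_ ?_ ?_ ?_
  · obtain ⟨i, hi⟩ := hJ
    rw [Finset.card_insert_of_notMem hθV]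
    exact Nat.succ_le_succ (Finset.card_pos.2 ⟨w i, Finset.mem_image_of_mem w (hJmem.2 hi)⟩)
  · have hJk : J ⊆ univ.erase k := fun i hi =>
      Finset.mem_erase.2 ⟨fun h => hk.ne' (h ▸ hJmem.1 hi), Finset.mem_univ i⟩
    have := (Finset.card_image_le (s := J) (f := w)).trans (Finset.card_le_card hJk)
    rw [Finset.card_insert_of_notMem hθV]
    simp only [Finset.card_erase_of_mem (Finset.mem_univ k), Finset.card_univ,
      Fintype.card_fin] at this
    have : 0 < d := k.pos
    omega
  · simp only [Finset.mem_insert, Finset.mem_image]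
    rintro v (rfl | ⟨i, hi, rfl⟩)
    · obtain ⟨i, hi⟩ := hJ
      exact ⟨hθB, hθ, Pi.lt_def.2 ⟨hβθ, k, hk⟩, i, hi⟩
    · have hwi := hw i (hJmem.1 hi)
      exact ⟨hwB i (hJmem.1 hi), hwi.1.1, Pi.lt_def.2 ⟨hwi.1.2.1, i, hwi.1.2.2⟩, k,
        isLeast_strictAboveAt_apply_eq hG hβ hθ hβθ (hJmem.1 hi) hwi hk.ne'⟩
  · simp only [Finset.mem_insert, Finset.mem_image]
    rintro v (rfl | ⟨i, hi, rfl⟩) v' (rfl | ⟨l, hl, rfl⟩) hne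
    · exact absurd rfl hne
    · exact (inf_comm _ (w l) ▸ isLeast_strictAboveAt_inf_eq hG hβ hθ hβθ (hJmem.1 hl)
        (hw l (hJmem.1 hl))).symm
    · exact (isLeast_strictAboveAt_inf_eq hG hβ hθ hβθ (hJmem.1 hi) (hw i (hJmem.1 hi))).symm
    · exact (inf_eq_of_isLeast_strictAboveAt_of_ne hG hβ hθ hβθ hk (hJmem.1 hi) (hJmem.1 hl)
        (hw i (hJmem.1 hi)) (hw l (hJmem.1 hl)) hne).symm
  · intro l
    by_cases hl : θ l = β l
    · exact ⟨w l, Finset.mem_insert_of_mem (Finset.mem_image_of_mem w (hJmem.2 hl)),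
        (hw l hl).1.2.2⟩
    · exact ⟨θ, Finset.mem_insert_self θ _, (hβθ l).lt_of_ne' hl⟩

end LeastAbove

end GoodSemigroup

section CanonicalPartition

variable {d : ℕ} {S E : Set (Vec d)}

theorem removedUpTo_mono : Monotone (removedUpTo S E) :=
  monotone_nat_of_le_succ fun _ => Set.subset_union_left

theorem mem_removedUpTo_iff {n : ℕ} {x : Vec d} :
    x ∈ removedUpTo S E n ↔ ∃ m < n, x ∈ Dstep S E (removedUpTo S E m) := by
  induction n with
  | zero => simp [removedUpTo]
  | succ n ih =>
    simp only [removedUpTo, Set.mem_union, ih, Nat.lt_succ_iff_lt_or_eq]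
    constructor
    · rintro (⟨m, hm, hx⟩ | hx)
      exacts [⟨m, Or.inl hm, hx⟩, ⟨n, Or.inr rfl, hx⟩]
    · rintro ⟨m, hm | rfl, hx⟩
      exacts [Or.inl ⟨m, hm, hx⟩, Or.inr hx]

theorem eq_of_mem_Dstep_of_mem_Dstep {m n : ℕ} {x : Vec d}
    (hm : x ∈ Dstep S E (removedUpTo S E m)) (hn : x ∈ Dstep S E (removedUpTo S E n)) :
    m = n := by
  by_contra hne
  rcases Nat.lt_or_gt_of_ne hne with h | h
  · exact hn.1.1.2 (mem_removedUpTo_iff.2 ⟨m, h, hm⟩)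
  · exact hm.1.1.2 (mem_removedUpTo_iff.2 ⟨n, h, hn⟩)

theorem notMem_removedUpTo_of_mem_Dstep {m n : ℕ} {x : Vec d}
    (hx : x ∈ Dstep S E (removedUpTo S E n)) (hmn : m ≤ n) : x ∉ removedUpTo S E m := by
  rw [mem_removedUpTo_iff]
  rintro ⟨k, hk, hxk⟩
  exact absurd (eq_of_mem_Dstep_of_mem_Dstep hxk hx) (by omega)

theorem mem_maxLL_of_le {A : Set (Vec d)} {β θ : Vec d} (hβ : β ∈ maxLL A) (hθ : θ ∈ A)
    (hβθ : β ≤ θ) : θ ∈ maxLL A :=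
  ⟨hθ, fun z hz hθz => hβ.2 z hz fun l => (hβθ l).trans_lt (hθz l)⟩

theorem exists_le_of_notMem_Dstep {R : Set (Vec d)} {θ : Vec d} (hθ : θ ∈ (S \ E) \ R)
    (hθD : θ ∉ Dstep S E R) (i : Fin d) : ∃ y ∈ (S \ E) \ R, θ ≤ y ∧ θ i < y i := by
  by_cases hmax : θ ∈ maxLL ((S \ E) \ R)
  · obtain ⟨r, b, F, -, -, hb, -, hF⟩ := not_not.1 fun h => hθD ⟨hmax, h⟩
    obtain ⟨q, hq⟩ : ∃ q, i ∉ F q := by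
      by_contra! h
      simpa [hF] using Finset.le_inf (s := univ) (f := F) (a := {i}) fun q _ => by simpa using h q
    obtain ⟨hbq, -, -, -, hFeq, hFlt⟩ := hb q
    refine ⟨b q, hbq.1, fun l => ?_, hFlt i hq⟩
    by_cases hl : l ∈ F q
    exacts [(hFeq l hl).ge, (hFlt l hl).le]
  · obtain ⟨y, hy, hθy⟩ : ∃ y ∈ (S \ E) \ R, llt θ y := by
      by_contra! h
      exact hmax ⟨hθ, h⟩
    exact ⟨y, hy, fun l => (hθy l).le, hθy i⟩

theorem notMem_Dstep_of_lt (hG : goodAxioms S) (m : ℕ) {β θ : Vec d} {k : Fin d}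
    (hprot : ∀ x ∈ S, β ≤ x → x k = β k → x ∈ S \ E)
    (hθ : θ ∈ (S \ E) \ removedUpTo S E m) (hβθ : β ≤ θ) (hk : β k < θ k) :
    β ∉ Dstep S E (removedUpTo S E m) := by
  induction m using Nat.strong_induction_on generalizing β θ with
  | _ m IH =>
  rintro ⟨hmax, hnCI⟩
  have hβ : β ∈ S := hmax.1.1.1
  have hJ : ∃ i, θ i = β i := by
    by_contra! h
    exact hmax.2 θ hθ fun l => (hβθ l).lt_of_ne (h l).symm
  choose! w hw using fun i (hi : θ i = β i) =>
    exists_isLeast_strictAboveAt hG hβ hθ.1.1 hβθ (fun h => hk.ne (h ▸ rfl)) hi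
  have hwk : ∀ i, θ i = β i → w i k = β k := fun i hi =>
    isLeast_strictAboveAt_apply_eq hG hβ hθ.1.1 hβθ hi (hw i hi) hk.ne'
  have hw_mem : ∀ i, θ i = β i → w i ∈ (S \ E) \ removedUpTo S E m := by
    intro i hi
    have hβw := (hw i hi).1.2.1
    refine ⟨hprot _ (hw i hi).1.1 hβw (hwk i hi), fun hrem => ?_⟩
    obtain ⟨m', hm', hD⟩ := mem_removedUpTo_iff.1 hrem
    obtain ⟨y, hy, hθy, hiy⟩ := exists_le_of_notMem_Dstep
      ⟨hθ.1, fun h => hθ.2 (removedUpTo_mono hm'.le h)⟩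
      (fun h => hθ.2 (mem_removedUpTo_iff.2 ⟨m', hm', h⟩)) i
    refine IH m' hm' (fun x hx hwx hxk => hprot x hx (hβw.trans hwx) (hxk.trans (hwk i hi))) hy
      ((hw i hi).2 ⟨hy.1.1, hβθ.trans hθy, hi ▸ hiy⟩) ?_ hD
    exact (hwk i hi).trans_lt (hk.trans_le (hθy k))
  exact hnCI (isCompleteInfIn_of_isLeast_strictAboveAt hG hβ hθ.1.1 hβθ hk hJ hw
    (mem_maxLL_of_le hmax hθ hβθ) fun i hi => mem_maxLL_of_le hmax (hw_mem i hi) (hw i hi).1.2.1)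

theorem le_of_minimal_DeltaSet (hinf : ∀ a ∈ S, ∀ b ∈ S, a ⊓ b ∈ S) {α β v : Vec d}
    (hβ : β ∈ DeltaSet S α) (hmin : ∀ x ∈ DeltaSet S α, ¬ x < β) (hv : v ∈ S) (hαv : llt α v) :
    β ≤ v := by
  obtain ⟨hβS, k, hk, hlt⟩ := hβ
  have hβv : β ⊓ v ∈ DeltaSet S α :=
    ⟨hinf β hβS v hv, k, by simp [Pi.inf_apply, hk, (hαv k).le],
      fun j hj => lt_min (hlt j hj) (hαv j)⟩
  exact inf_le_left.eq_of_not_lt (hmin _ hβv) ▸ inf_le_right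

theorem mem_Dstep_of_minimal_DeltaSet (hG : goodAxioms S) {α β β' : Vec d}
    (hsub : DeltaSet S α ⊆ S \ E) (hβ : β ∈ DeltaSet S α) (hmin : ∀ x ∈ DeltaSet S α, ¬ x < β)
    (hβ' : β' ∈ DeltaSet S α) {m : ℕ} (hD : β ∈ Dstep S E (removedUpTo S E m))
    (hβ'm : β' ∈ (S \ E) \ removedUpTo S E m) : β' ∈ Dstep S E (removedUpTo S E m) := by
  by_contra hD'
  obtain ⟨-, k', hk'eq, hk'lt⟩ := hβ'
  obtain ⟨y, hy, hβ'y, hk'y⟩ := exists_le_of_notMem_Dstep hβ'm hD' k'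
  have hαy : llt α y := fun j => by
    by_cases hj : j = k'
    · subst hj; exact hk'eq ▸ hk'y
    · exact (hk'lt j hj).trans_le (hβ'y j)
  have hβy := le_of_minimal_DeltaSet hG.1 hβ hmin hy.1.1 hαy
  obtain ⟨-, k, hkeq, hklt⟩ := hβ
  refine notMem_Dstep_of_lt hG m (k := k) (fun x hx hβx hxk => hsub ⟨hx, k, hxk.trans hkeq,
    fun j hj => (hklt j hj).trans_le (hβx j)⟩) hy hβy (hkeq ▸ hαy k) hD

theorem eq_of_minimal_DeltaSet_mem_Dstep (hG : goodAxioms S) {α β β' : Vec d}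
    (hsub : DeltaSet S α ⊆ S \ E) (hβ : β ∈ DeltaSet S α) (hmin : ∀ x ∈ DeltaSet S α, ¬ x < β)
    (hβ' : β' ∈ DeltaSet S α) (hmin' : ∀ x ∈ DeltaSet S α, ¬ x < β') {m n : ℕ}
    (hD : β ∈ Dstep S E (removedUpTo S E m)) (hD' : β' ∈ Dstep S E (removedUpTo S E n)) :
    m = n := by
  wlog hmn : m ≤ n generalizing β β' m n
  · exact (this hβ' hmin' hβ hmin hD' hD (le_of_not_ge hmn)).symm
  refine eq_of_mem_Dstep_of_mem_Dstep (mem_Dstep_of_minimal_DeltaSet hG hsub hβ hmin hβ' hD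
    ⟨hsub hβ', notMem_removedUpTo_of_mem_Dstep hD' hmn⟩) hD'

end CanonicalPartition

theorem stmt5_general {d : ℕ} (S E : Set (Vec d)) (hS : IsGoodSemigroup S)
    (N : ℕ) (hN : LevelsTo S E N)
    (α : Vec d)
    (hsub : DeltaSet S α ⊆ S \ E) :
    ∃ i : ℕ, ∀ β ∈ DeltaSet S α,
      (∀ x ∈ DeltaSet S α, ¬ x < β) → β ∈ Level S E N i := by
  have hlevel : ∀ β ∈ DeltaSet S α, ∃ i, (1 ≤ i ∧ i ≤ N) ∧ β ∈ Dlevel S E i := fun β hβ => by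
    obtain ⟨i, hi, hD⟩ := Set.mem_iUnion₂.1 (hN ▸ hsub hβ)
    exact ⟨i, Finset.mem_Icc.1 hi, hD⟩
  by_cases hmin : ∃ β₀ ∈ DeltaSet S α, ∀ x ∈ DeltaSet S α, ¬ x < β₀
  · obtain ⟨β₀, hβ₀, hmin₀⟩ := hmin
    obtain ⟨i₀, hi₀, hD₀⟩ := hlevel β₀ hβ₀
    refine ⟨N + 1 - i₀, fun β hβ hminβ => ?_⟩
    obtain ⟨i, hi, hD⟩ := hlevel β hβ
    have := eq_of_minimal_DeltaSet_mem_Dstep hS.2.2 hsub hβ hminβ hβ₀ hmin₀ hD hD₀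
    rwa [Level, show N + 1 - (N + 1 - i₀) = i by omega]
  · exact ⟨0, fun β hβ hminβ => absurd ⟨β, hβ, hminβ⟩ hmin⟩

theorem stmt5 {d : ℕ} (S E : Set (Vec d)) (hS : IsGoodSemigroup S)
    (hE : IsGoodIdeal S E) (N : ℕ) (hN : LevelsTo S E N)
    (α : Vec d) (hne : (DeltaSet S α).Nonempty)
    (hsub : DeltaSet S α ⊆ S \ E) :
    ∃ i : ℕ, ∀ β ∈ DeltaSet S α,
      (∀ x ∈ DeltaSet S α, ¬ x < β) → β ∈ Level S E N i :=
  stmt5_general S E hS N hN α hsub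
end

section
/- Let S ⊆ ℕ^d be a good semigroup and A = A_1 ∪ ... ∪ A_N the complement of a proper good ideal E ⊊ S, partitioned in levels. For every α ∈ A_i with i < N and every coordinate k ∈ {1,...,d}, there exists β ∈ A_{i+1} with β ≥ α and β_k > α_k. -/
open Finset Set

/-!
Every element of `A = S \ E` lies strictly below the conductor `c` of `E` in some coordinate, so
the capped weight `∑ⱼ min (xⱼ, cⱼ)` is bounded on `A` and strictly increases along every step
`x ≤ y` that raises such a coordinate. Passing from a non-`≪`-maximal element to a `≪`-larger
one, and from a complete infimum to one of its factors (which can be chosen to raise any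
prescribed coordinate), are such steps. From `α ∈ A_i`, a first step of either kind raises the
coordinate `k`; further steps then end at an element that is `≪`-maximal and not a complete
infimum among the elements not yet removed, i.e. at an element of `A_{i+1}`.
-/

theorem exists_le_not_of_forall_exists_lt {α : Type*} [Preorder α] {T : Set α} {P : α → Prop}
    (f : α → ℕ) (B : ℕ) (hB : ∀ x ∈ T, f x ≤ B)
    (hstep : ∀ x ∈ T, P x → ∃ y ∈ T, x ≤ y ∧ f x < f y) :
    ∀ x ∈ T, ∃ y ∈ T, x ≤ y ∧ ¬ P y := by
  intro x
  induction x using (measure fun x => B - f x).wf.induction with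
  | h x ih =>
    intro hx
    by_cases hP : P x
    · obtain ⟨y, hy, hxy, hlt⟩ := hstep x hx hP
      have hyB := hB y hy
      obtain ⟨z, hz, hyz, hPz⟩ := ih y (show B - f y < B - f x by omega) hy
      exact ⟨z, hz, hxy.trans hyz, hPz⟩
    · exact ⟨x, hx, le_rfl, hP⟩

section CappedSum

variable {d : ℕ}

def cappedSum (c x : Vec d) : ℕ := ∑ j, min (x j) (c j)

theorem cappedSum_le (c x : Vec d) : cappedSum c x ≤ ∑ j, c j :=
  Finset.sum_le_sum fun _ _ => min_le_right _ _

theorem cappedSum_lt_cappedSum (c : Vec d) {x y : Vec d} (hxy : x ≤ y) {j : Fin d}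
    (hj : x j < y j) (hjc : x j < c j) : cappedSum c x < cappedSum c y :=
  Finset.sum_lt_sum (fun m _ => min_le_min (hxy m) le_rfl)
    ⟨j, Finset.mem_univ j, (min_le_left _ _).trans_lt (lt_min hj hjc)⟩

end CappedSum

section CanonicalPartition

variable {d : ℕ}

theorem IsCompleteInfIn.exists_mem_le_lt {S B : Set (Vec d)} {θ : Vec d}
    (hθ : IsCompleteInfIn S B θ) (k : Fin d) : ∃ β ∈ B, θ ≤ β ∧ θ k < β k := by
  obtain ⟨r, β, F, -, -, hβ, -, hinf⟩ := hθ
  obtain ⟨j, hkj⟩ : ∃ j, k ∉ F j := by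
    by_contra! h
    have hk : {k} ≤ Finset.univ.inf F :=
      Finset.le_inf fun j _ => Finset.singleton_subset_iff.mpr (h j)
    simp [hinf] at hk
  obtain ⟨hβB, -, -, -, heq, hlt⟩ := hβ j
  refine ⟨β j, hβB, fun m => ?_, hlt k hkj⟩
  by_cases hm : m ∈ F j
  · exact (heq m hm).ge
  · exact (hlt m hm).le

theorem exists_llt_of_notMem_maxLL {C : Set (Vec d)} {θ : Vec d} (hθ : θ ∈ C)
    (hmax : θ ∉ maxLL C) : ∃ β ∈ C, llt θ β := by
  by_contra! h
  exact hmax ⟨hθ, h⟩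

theorem exists_le_mem_maxLL_not_isCompleteInfIn (S : Set (Vec d)) {C : Set (Vec d)}
    {c : Vec d} (hc : ∀ x ∈ C, ¬ c ≤ x) {θ : Vec d} (hθ : θ ∈ C) :
    ∃ β ∈ maxLL C, θ ≤ β ∧ ¬ IsCompleteInfIn S (maxLL C) β := by
  have hlow : ∀ x ∈ C, ∃ j, x j < c j := fun x hx => by
    simpa [Pi.le_def] using hc x hx
  have hbound : ∀ x ∈ C, cappedSum c x ≤ ∑ j, c j := fun x _ => cappedSum_le c x
  have hclimb : ∀ x ∈ C, x ∉ maxLL C →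
      ∃ y ∈ C, x ≤ y ∧ cappedSum c x < cappedSum c y := by
    intro x hx hmax
    obtain ⟨y, hy, hxy⟩ := exists_llt_of_notMem_maxLL hx hmax
    obtain ⟨j, hj⟩ := hlow x hx
    exact ⟨y, hy, fun m => (hxy m).le,
      cappedSum_lt_cappedSum c (fun m => (hxy m).le) (hxy j) hj⟩
  have hescape : ∀ x ∈ maxLL C, IsCompleteInfIn S (maxLL C) x →
      ∃ y ∈ maxLL C, x ≤ y ∧ cappedSum c x < cappedSum c y := by
    intro x hx hci
    obtain ⟨j, hj⟩ := hlow x hx.1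
    obtain ⟨y, hy, hxy, hxyj⟩ := hci.exists_mem_le_lt j
    exact ⟨y, hy, hxy, cappedSum_lt_cappedSum c hxy hxyj hj⟩
  obtain ⟨θ', hθ', hθθ', hθ'max⟩ :=
    exists_le_not_of_forall_exists_lt _ _ hbound hclimb θ hθ
  obtain ⟨β, hβ, hθ'β, hβci⟩ := exists_le_not_of_forall_exists_lt _ _
    (fun x hx => hbound x hx.1) hescape θ' (not_not.mp hθ'max)
  exact ⟨β, hβ, hθθ'.trans hθ'β, hβci⟩

theorem exists_mem_le_lt_of_notMem_Dstep {S E R : Set (Vec d)} {α : Vec d}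
    (hα : α ∈ (S \ E) \ R) (hαD : α ∉ Dstep S E R) (k : Fin d) :
    ∃ θ ∈ (S \ E) \ R, α ≤ θ ∧ α k < θ k := by
  by_cases hmax : α ∈ maxLL ((S \ E) \ R)
  · have hci : IsCompleteInfIn S (maxLL ((S \ E) \ R)) α := by
      by_contra h
      exact hαD ⟨hmax, h⟩
    obtain ⟨θ, hθ, hαθ⟩ := hci.exists_mem_le_lt k
    exact ⟨θ, hθ.1, hαθ⟩
  · obtain ⟨θ, hθ, hαθ⟩ := exists_llt_of_notMem_maxLL hα hmax
    exact ⟨θ, hθ, fun m => (hαθ m).le, hαθ k⟩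

theorem exists_le_mem_Dstep {S E R : Set (Vec d)} (hE : ∃ c ∈ E, ∀ x, c ≤ x → x ∈ E)
    {θ : Vec d} (hθ : θ ∈ (S \ E) \ R) : ∃ β ∈ Dstep S E R, θ ≤ β := by
  obtain ⟨c, -, hc⟩ := hE
  obtain ⟨β, hβ, hθβ, hβci⟩ :=
    exists_le_mem_maxLL_not_isCompleteInfIn S (fun x hx hcx => hx.1.2 (hc x hcx)) hθ
  exact ⟨β, ⟨hβ, hβci⟩, hθβ⟩

theorem mem_Dlevel_succ_succ {S E : Set (Vec d)} {n : ℕ} {α : Vec d}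
    (hα : α ∈ Dlevel S E (n + 2)) :
    α ∈ (S \ E) \ removedUpTo S E n ∧ α ∉ Dlevel S E (n + 1) := by
  obtain ⟨⟨⟨hA, hR⟩, -⟩, -⟩ := hα
  exact ⟨⟨hA, fun h => hR (Or.inl h)⟩, fun h => hR (Or.inr h)⟩

theorem Level_eq_Dlevel {S E : Set (Vec d)} {N i : ℕ} (hiN : i < N) :
    Level S E N i = Dlevel S E (N - i - 1 + 2) ∧
      Level S E N (i + 1) = Dlevel S E (N - i - 1 + 1) := by
  unfold Level
  constructor <;> congr 1 <;> omega

end CanonicalPartition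

theorem stmt7_general {d : ℕ} (S E : Set (Vec d))
    (hE : IsGoodIdeal S E) (N : ℕ) (i : ℕ) (hiN : i < N)
    (α : Vec d) (hα : α ∈ Level S E N i) (k : Fin d) :
    ∃ β ∈ Level S E N (i + 1), α ≤ β ∧ α k < β k := by
  obtain ⟨hLi, hLi1⟩ := Level_eq_Dlevel (S := S) (E := E) hiN
  rw [hLi] at hα
  rw [hLi1]
  obtain ⟨hαA, hαD⟩ := mem_Dlevel_succ_succ hα
  obtain ⟨θ, hθ, hαθ, hαθk⟩ := exists_mem_le_lt_of_notMem_Dstep hαA hαD k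
  obtain ⟨β, hβ, hθβ⟩ := exists_le_mem_Dstep hE.2.2.2.2 hθ
  exact ⟨β, hβ, hαθ.trans hθβ, hαθk.trans_le (hθβ k)⟩

theorem stmt7 {d : ℕ} (S E : Set (Vec d)) (hS : IsGoodSemigroup S)
    (hE : IsGoodIdeal S E) (hprop : E ≠ S)
    (N : ℕ) (hN : LevelsTo S E N)
    (i : ℕ) (hi : 1 ≤ i) (hiN : i < N)
    (α : Vec d) (hα : α ∈ Level S E N i) (k : Fin d) :
    ∃ β ∈ Level S E N (i + 1), α ≤ β ∧ α k < β k :=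
  stmt7_general S E hE N i hiN α hα k
end

section
/- Let S ⊆ ℕ^d be a good semigroup and A a symmetric complement of a good ideal E ⊆ S. If β ∈ A and the set Δ̃^E_G(β) is empty for some G ⊆ {1,...,d}, then there exists k ∈ G such that Δ^S_k(γ_E − β) is nonempty. -/
open Finset Set

/-!
Put `V = γ_E − β`. For every `a ≤ V` agreeing with `V` on `G`, the point `β + (V − a)` is `β` or
lies in `Δ̃^E_G(β)`, so it is not in `E` and symmetry gives `Δ^S(a) ≠ ∅`. The rest uses only axiom
(G2), which raises an element of `S` at a coordinate where it ties with another element while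
keeping the minimum of the two elsewhere. Coordinates `q ∉ G` with `Δ^S_q(V) = ∅` may be added to
`G`. Then an element of `Δ^S(a)`, for `a` equal to `V` on `G` and one below the lower bounds
reached so far off `G`, either sits at a coordinate `k ∈ G` and, once its coordinates off `G` and
then its ties are raised, gives an element of `Δ^S_k(V)`, or pushes the lower bound at some
coordinate one step further down, which can happen only finitely often.
-/

section GoodSemigroup

variable {d : ℕ} {S : Set (Vec d)}

theorem goodAxioms.exists_gt_of_eq_of_lt (hS : goodAxioms S) {a b : Vec d} (ha : a ∈ S)
    (hb : b ∈ S) {i p : Fin d} (hi : a i = b i) (hp : a p < b p) :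
    ∃ e ∈ S, a i < e i ∧ e p = a p ∧ ∀ j ≠ i, min (a j) (b j) ≤ e j := by
  have hpi : p ≠ i := by rintro rfl; omega
  obtain ⟨e, heS, hei, hej⟩ := hS.2.1 a ha b hb (by rintro rfl; omega) i hi
  refine ⟨e, heS, hei, ?_, fun j hj => (hej j hj).1⟩
  rw [(hej p hpi).2 hp.ne, min_eq_left hp.le]

theorem deltaZk_nonempty_of_ge (hS : goodAxioms S) {V : Fin d → ℤ} {m : Fin d} {x : Vec d}
    (hx : x ∈ S) (hxm : (x m : ℤ) = V m) (hle : ∀ j ≠ m, V j ≤ x j)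
    (hties : ∀ j ≠ m, (x j : ℤ) = V j → (DeltaZk S j V).Nonempty) :
    (DeltaZk S m V).Nonempty := by
  classical
  induction hn : (univ.filter fun j => j ≠ m ∧ (x j : ℤ) = V j).card
    using Nat.strong_induction_on generalizing x with
  | _ n ih =>
  by_cases hfree : ∀ j ≠ m, (x j : ℤ) ≠ V j
  · exact ⟨x, hx, hxm, fun j hj => lt_of_le_of_ne (hle j hj) (hfree j hj).symm⟩
  push Not at hfree
  obtain ⟨q, hqm, hxq⟩ := hfree
  obtain ⟨y, hyS, hyq, hy⟩ := hties q hqm hxq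
  obtain ⟨e, heS, hqe, hem, hemin⟩ :=
    hS.exists_gt_of_eq_of_lt hx hyS (i := q) (p := m) (by omega) (by have := hy m hqm.symm; omega)
  have hmin : ∀ j ≠ q, j ≠ m → min (x j : ℤ) (V j + 1) ≤ e j := fun j hjq hjm => by
    have := hemin j hjq; have := hy j hjq; omega
  have hsub : (univ.filter fun j => j ≠ m ∧ (e j : ℤ) = V j) ⊂
      univ.filter fun j => j ≠ m ∧ (x j : ℤ) = V j := by
    refine Finset.ssubset_iff_of_subset (fun j => ?_) |>.2 ⟨q, by simp [hqm, hxq], ?_⟩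
    · simp only [Finset.mem_filter, Finset.mem_univ, true_and]
      rintro ⟨hjm, hej⟩
      have hjq : j ≠ q := by rintro rfl; omega
      have := hmin j hjq hjm; have := hle j hjm
      omega
    · simp only [Finset.mem_filter, Finset.mem_univ, true_and, not_and]; omega
  refine ih _ (hn ▸ Finset.card_lt_card hsub) heS (by omega) (fun j hjm => ?_)
    (fun j hjm hej => ?_) rfl
  · rcases eq_or_ne j q with rfl | hjq
    · omega
    · have := hmin j hjq hjm; have := hle j hjm; omega
  · have hjq : j ≠ q := by rintro rfl; omega
    have := hmin j hjq hjm; have := hle j hjm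
    exact hties j hjm (by omega)

theorem exists_eq_at_and_ge_elsewhere (hS : goodAxioms S) (W : Fin d → ℤ) {p : Fin d}
    {x : Vec d} (hx : x ∈ S) (hxp : (x p : ℤ) < W p)
    (hlift : ∀ j ≠ p, ∀ t : ℤ, x j ≤ t → t < W j →
      ∃ n ∈ S, (n j : ℤ) = t ∧ ∀ l ≠ j, W l ≤ n l) :
    ∃ x' ∈ S, x' p = x p ∧ ∀ j ≠ p, W j ≤ x' j := by
  induction hn : ∑ j, (W j - x j).toNat using Nat.strong_induction_on generalizing x with
  | _ n ih =>
  by_cases hdone : ∀ j ≠ p, W j ≤ x j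
  · exact ⟨x, hx, rfl, hdone⟩
  push Not at hdone
  obtain ⟨q, hqp, hxq⟩ := hdone
  obtain ⟨y, hyS, hyq, hy⟩ := hlift q hqp (x q) le_rfl hxq
  obtain ⟨e, heS, hqe, hep, hemin⟩ :=
    hS.exists_gt_of_eq_of_lt hx hyS (i := q) (p := p) (by omega) (by have := hy p hqp.symm; omega)
  have hmin : ∀ j ≠ q, min (x j : ℤ) (W j) ≤ e j := fun j hjq => by
    have := hemin j hjq; have := hy j hjq; omega
  have hlt : ∑ j, (W j - e j).toNat < n := hn ▸ Finset.sum_lt_sum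
    (fun j _ => by
      rcases eq_or_ne j q with rfl | hjq
      · omega
      · have := hmin j hjq; omega)
    ⟨q, Finset.mem_univ q, by omega⟩
  obtain ⟨x', hx'S, hx'p, hx'⟩ := ih _ hlt heS (by omega) (fun j hjp t hjt htW => by
    rcases eq_or_ne j q with rfl | hjq
    · exact hlift j hjp t (by omega) htW
    · exact hlift j hjp t (by have := hmin j hjq; omega) htW) rfl
  exact ⟨x', hx'S, hx'p.trans hep, hx'⟩

theorem exists_mem_deltaZk_nonempty_of_compl (hS : goodAxioms S) {V : Fin d → ℤ}
    {G : Finset (Fin d)} (hcompl : ∀ q ∉ G, (DeltaZk S q V).Nonempty)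
    (hΔ : ∀ a ≤ V, (∀ i ∈ G, a i = V i) → (DeltaZ S a).Nonempty) :
    ∃ k ∈ G, (DeltaZk S k V).Nonempty := by
  classical
  -- `W l ≤ n l` says `n l > V l` on `G` and `n l ≥ V l` off `G`.
  set W : Fin d → ℤ := fun j => if j ∈ G then V j + 1 else V j with hW
  -- Each round either finds `Δ^S_k(V) ≠ ∅` with `k ∈ G` or lowers some `b k` by one; it stays
  -- `≥ 0` because the new value `b k - 1` is a coordinate of an element of `S`.
  suffices H : ∀ b : Fin d → ℤ, (∀ q ∉ G, b q ≤ V q) →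
      (∀ q ∉ G, ∀ t : ℤ, b q ≤ t → t < V q →
        ∃ n ∈ S, (n q : ℤ) = t ∧ ∀ l ≠ q, W l ≤ n l) →
      ∃ k ∈ G, (DeltaZk S k V).Nonempty from
    H V (fun _ _ => le_rfl) fun _ _ t h₁ h₂ => absurd h₂ (not_lt.2 h₁)
  intro b
  induction hn : ∑ j, (b j).toNat using Nat.strong_induction_on generalizing b with
  | _ n ih =>
  intro hbV hb
  obtain ⟨θ, hθS, k, hθk, hθ⟩ := hΔ (fun j => if j ∈ G then V j else b j - 1)
    (fun j => by
      dsimp only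
      split_ifs with hj
      · exact le_rfl
      · have := hbV j hj; omega)
    (fun i hi => if_pos hi)
  have hθW : (θ k : ℤ) < W k := by
    have := hbV k
    simp only [hW] at hθk ⊢
    split_ifs at hθk ⊢ with hkG
    · omega
    · have := this hkG; omega
  obtain ⟨x, hxS, hxk, hxW⟩ := exists_eq_at_and_ge_elsewhere hS W hθS hθW
    fun j hjk t hjt htW => by
      have := hθ j hjk
      simp only [hW] at this htW
      split_ifs at this htW with hj
      · omega
      · exact hb j hj t (by omega) htW
  by_cases hkG : k ∈ G
  · refine ⟨k, hkG, deltaZk_nonempty_of_ge hS hxS ?_ (fun j hjk => ?_) fun j hjk hxj => ?_⟩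
    · simpa [hxk, hkG] using hθk
    · have := hxW j hjk; simp only [hW] at this; split_ifs at this <;> omega
    · refine hcompl j fun hjG => ?_
      have := hxW j hjk; simp only [hW, if_pos hjG] at this; omega
  · simp only [if_neg hkG] at hθk
    have hbk : 1 ≤ b k := by omega
    refine ih _ ?_ (Function.update b k (b k - 1)) rfl (fun q hq => ?_) fun q hq t hqt htV => ?_
    · refine hn ▸ Finset.sum_lt_sum (fun j _ => ?_) ⟨k, Finset.mem_univ k, ?_⟩
      · rcases eq_or_ne j k with rfl | hjk
        · simp only [Function.update_self]; omega
        · rw [Function.update_of_ne hjk]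
      · simp only [Function.update_self]; omega
    · rcases eq_or_ne q k with rfl | hqk
      · simp only [Function.update_self]; have := hbV q hq; omega
      · rw [Function.update_of_ne hqk]; exact hbV q hq
    · rcases eq_or_ne q k with rfl | hqk
      · rw [Function.update_self] at hqt
        rcases eq_or_lt_of_le hqt with rfl | hqt
        · exact ⟨x, hxS, by omega, hxW⟩
        · exact hb q hq t (by omega) htV
      · rw [Function.update_of_ne hqk] at hqt
        exact hb q hq t hqt htV

theorem exists_mem_deltaZk_nonempty (hS : goodAxioms S) {V : Fin d → ℤ} {G : Finset (Fin d)}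
    (hΔ : ∀ a ≤ V, (∀ i ∈ G, a i = V i) → (DeltaZ S a).Nonempty) :
    ∃ k ∈ G, (DeltaZk S k V).Nonempty := by
  classical
  obtain ⟨k, hk, hne⟩ := exists_mem_deltaZk_nonempty_of_compl hS
    (G := G ∪ univ.filter fun q => ¬(DeltaZk S q V).Nonempty)
    (fun q hq => by
      simp only [Finset.mem_union, Finset.mem_filter, Finset.mem_univ, true_and, not_or,
        not_not] at hq
      exact hq.2) fun a ha haG => hΔ a ha fun i hi => haG i (by simp [hi])
  rcases Finset.mem_union.1 hk with hkG | hk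
  · exact ⟨k, hkG, hne⟩
  · exact absurd hne (Finset.mem_filter.1 hk).2

theorem memZ_coeZ_iff {T : Set (Vec d)} {x : Vec d} : memZ T (coeZ x) ↔ x ∈ T := by
  refine ⟨fun ⟨a, haT, ha⟩ => ?_, fun hx => ⟨x, hx, rfl⟩⟩
  convert haT using 1
  funext j
  have := congrFun ha j
  simp only [coeZ, Nat.cast_inj] at this
  exact this.symm

end GoodSemigroup

theorem stmt10_general {d : ℕ} (S E : Set (Vec d)) (hS : IsGoodSemigroup S) (N : ℕ) (c : Vec d)
    (hsym : SymComplement S E (fun j => (c j : ℤ) - 1) N)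
    (β : Vec d) (hβ : β ∈ S \ E)
    (G : Finset (Fin d)) (hG : DeltaTildeF E G β = ∅) :
    ∃ k ∈ G, (DeltaZk S k ((fun l => (c l : ℤ) - 1) - coeZ β)).Nonempty := by
  set γ : Fin d → ℤ := fun l => (c l : ℤ) - 1
  refine exists_mem_deltaZk_nonempty hS.2.2 fun a ha haG => ?_
  set w : Vec d := fun j => β j + (γ j - β j - a j).toNat
  have hwa : γ - coeZ w = a := funext fun j => by
    have := ha j; simp only [w, γ, coeZ, Pi.sub_apply] at this ⊢; omega
  have hwE : w ∉ E := fun hwE => by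
    by_cases hwβ : w = β
    · exact hβ.2 (hwβ ▸ hwE)
    refine Set.eq_empty_iff_forall_notMem.1 hG w
      ⟨⟨hwE, fun i hi => ?_, fun j _ => ?_⟩, hwβ⟩
    · have := haG i hi; simp only [w, γ, coeZ, Pi.sub_apply] at this ⊢; omega
    · exact Nat.le_add_right _ _
  rw [Set.nonempty_iff_ne_empty, ← hwa]
  exact fun h => hwE (memZ_coeZ_iff.1 ((hsym.2.1 _).2 h))

theorem stmt10 {d : ℕ} (S E : Set (Vec d)) (hS : IsGoodSemigroup S)
    (hE : IsGoodIdeal S E) (N : ℕ) (hN : LevelsTo S E N)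
    (c : Vec d) (hc : IsConductor E c)
    (hsym : SymComplement S E (fun j => (c j : ℤ) - 1) N)
    (β : Vec d) (hβ : β ∈ S \ E)
    (G : Finset (Fin d)) (hG : DeltaTildeF E G β = ∅) :
    ∃ k ∈ G, (DeltaZk S k ((fun l => (c l : ℤ) - 1) - coeZ β)).Nonempty :=
  stmt10_general S E hS N c hsym β hβ G hG
end

section
/- Let S ⊆ ℕ^2 be a symmetric local good semigroup with minimal nonzero element e, and suppose Δ^S(e) ≠ ∅. Then every absolute element of S belongs to the Apéry set Ap(S, e) = S \ (e + S). -/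
open Finset Set

theorem add_mem_deltaSet_add {d : ℕ} {S : Set (Vec d)}
    (hadd : ∀ a ∈ S, ∀ b ∈ S, a + b ∈ S) {α θ s : Vec d}
    (hθ : θ ∈ DeltaSet S α) (hs : s ∈ S) : θ + s ∈ DeltaSet S (α + s) := by
  obtain ⟨hθS, k, hθk, hθj⟩ := hθ
  refine ⟨hadd θ hθS s hs, k, by simp [hθk], fun j hj => ?_⟩
  simpa only [Pi.add_apply, Nat.add_lt_add_iff_right] using hθj j hj

theorem deltaSet_add_nonempty {d : ℕ} {S : Set (Vec d)}
    (hadd : ∀ a ∈ S, ∀ b ∈ S, a + b ∈ S) {α s : Vec d}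
    (hα : (DeltaSet S α).Nonempty) (hs : s ∈ S) : (DeltaSet S (α + s)).Nonempty :=
  let ⟨θ, hθ⟩ := hα
  ⟨θ + s, add_mem_deltaSet_add hadd hθ hs⟩

theorem stmt18_general (S : Set (Vec 2)) (hS : IsGoodSemigroup S)
    (e : Vec 2)
    (hΔ : (DeltaSet S e).Nonempty) :
    ∀ α ∈ S, DeltaSet S α = ∅ → ¬ ∃ s ∈ S, α = e + s := by
  rintro α - hΔα ⟨s, hs, rfl⟩
  exact (deltaSet_add_nonempty hS.2.1 hΔ hs).ne_empty hΔα

theorem stmt18 (S : Set (Vec 2)) (hS : IsGoodSemigroup S)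
    (hloc : ∀ x ∈ S, (∃ i, x i = 0) → x = 0)
    (c : Vec 2) (hc : IsConductor S c)
    (hsym : ∀ α : Fin 2 → ℤ,
      memZ S α ↔ DeltaZ S ((fun i => (c i : ℤ) - 1) - α) = ∅)
    (e : Vec 2) (he : e ∈ S) (hepos : ∀ i, 0 < e i)
    (hemin : ∀ x ∈ S, (∀ i, 0 < x i) → e ≤ x)
    (hΔ : (DeltaSet S e).Nonempty) :
    ∀ α ∈ S, DeltaSet S α = ∅ → ¬ ∃ s ∈ S, α = e + s :=
  stmt18_general S hS e hΔ
end
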